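/- Let C be a finite abelian group isomorphic to Z/9Z × Z/3Z and let σ be an automorphism of C such that the fixed-point subgroup C^σ = {c ∈ C : σ(c) = c} equals the subgroup C^3 = {c^3 : c ∈ C} of cubes. Then the image of the endomorphism c ↦ c · σ(c)^{-1} is a subgroup of order 9 that is elementary abelian of type (3,3). -/

import Mathlib

/-!
The endomorphism `φ = 1 - σ` has kernel `C^σ = C³`, which has order 3 in `ℤ/9 × ℤ/3`, so its image
has order `27 / 3 = 9`. Every element `c σ(c)⁻¹` of the image has cube `c³ σ(c³)⁻¹ = 1`, since cubes
are fixed by `σ`; a group of order 9 and exponent 3 is a 2-dimensional `𝔽₃`-vector space.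
-/

theorem nonempty_mulEquiv_zmod_prod_of_card_eq_sq {G : Type*} [CommGroup G] {p : ℕ} [Fact p.Prime]
    (hcard : Nat.card G = p ^ 2) (hexp : ∀ x : G, x ^ p = 1) :
    Nonempty (G ≃* Multiplicative (ZMod p × ZMod p)) := by
  have : Finite G := Nat.finite_of_card_ne_zero (by simp [hcard, (Fact.out : p.Prime).ne_zero])
  let _ : Module (ZMod p) (Additive G) := AddCommGroup.zmodModule (n := p) fun x ↦ hexp x.toMul
  have hrank : Module.finrank (ZMod p) (Additive G) = Module.finrank (ZMod p) (ZMod p × ZMod p) := by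
    have : Fintype G := Fintype.ofFinite G
    have h := Module.card_eq_pow_finrank (K := ZMod p) (V := Additive G)
    rw [Fintype.card_congr Additive.toMul, ← Nat.card_eq_fintype_card, hcard, ZMod.card] at h
    rw [Module.finrank_prod, Module.finrank_self]
    exact (Nat.pow_right_injective (Fact.out : p.Prime).two_le h).symm
  obtain ⟨e⟩ := FiniteDimensional.nonempty_linearEquiv_of_finrank_eq hrank
  exact ⟨(MulEquiv.multiplicativeAdditive G).symm.trans e.toAddEquiv.toMultiplicative⟩

theorem MulEquiv.card_range_powMonoidHom {G H : Type*} [CommGroup G] [CommGroup H] (e : G ≃* H)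
    (n : ℕ) : Nat.card (powMonoidHom n : H →* H).range = Nat.card (powMonoidHom n : G →* G).range := by
  have hcomm : (e : G →* H).comp (powMonoidHom n) = (powMonoidHom n).comp e := by
    ext; simp
  have hmap : (powMonoidHom n : H →* H).range = (powMonoidHom n : G →* G).range.map e := by
    rw [← MonoidHom.range_comp, hcomm, MonoidHom.range_comp, e.range_eq_top,
      ← MonoidHom.range_eq_map]
  rw [hmap, Subgroup.card_map_of_injective e.injective]

theorem card_range_powMonoidHom_three :
    Nat.card (powMonoidHom 3 : Multiplicative (ZMod 9 × ZMod 3) →* _).range = 3 := by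
  rw [Nat.card_eq_fintype_card]; decide

theorem MonoidHom.pow_eq_one_of_mem_range {G H : Type*} [CommGroup G] [Group H] {f : G →* H} {n : ℕ}
    (h : (powMonoidHom n : G →* G).range ≤ f.ker) (x : f.range) : x ^ n = 1 := by
  obtain ⟨_, c, rfl⟩ := x
  exact Subtype.ext (by simpa [← map_pow] using h ⟨c, rfl⟩)

/-- If `C ≅ Z/9 × Z/3` and `σ` is an automorphism whose fixed subgroup equals the
subgroup of cubes, then the image of `c ↦ c * (σ c)⁻¹` has order 9 and is
elementary abelian of type (3,3). -/
theorem stmt3 {C : Type*} [CommGroup C]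
    (_h : Nonempty (C ≃* Multiplicative (ZMod 9 × ZMod 3)))
    (σ : C ≃* C)
    (hfix : {c : C | σ c = c} = {c : C | ∃ d : C, d ^ 3 = c})
    (φ : C →* C) (hφ : ∀ c : C, φ c = c * (σ c)⁻¹) :
    Nat.card φ.range = 9 ∧
      Nonempty (φ.range ≃* Multiplicative (ZMod 3 × ZMod 3)) := by
  obtain ⟨e⟩ := _h
  have hker : φ.ker = (powMonoidHom 3 : C →* C).range := SetLike.coe_injective <| by
    ext c
    simp only [SetLike.mem_coe, MonoidHom.mem_ker, hφ, mul_inv_eq_one, MonoidHom.mem_range,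
      powMonoidHom_apply, eq_comm (a := c)]
    exact Set.ext_iff.1 hfix c
  have hcard : Nat.card φ.range = 9 := by
    have h := φ.ker.card_mul_index
    rw [Subgroup.index_ker, hker, ← e.card_range_powMonoidHom, card_range_powMonoidHom_three,
      Nat.card_congr e.toEquiv, Nat.card_eq_fintype_card (α := Multiplicative (ZMod 9 × ZMod 3)),
      Fintype.card_multiplicative, Fintype.card_prod, ZMod.card, ZMod.card] at h
    omega
  exact ⟨hcard, nonempty_mulEquiv_zmod_prod_of_card_eq_sq hcard
    (MonoidHom.pow_eq_one_of_mem_range hker.ge)⟩
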